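/- The query language of piece-wise linear warded sets of TGDs with conjunctive queries is strictly more expressive than piece-wise linear Datalog with respect to program expressive power: PWL-DATALOG <_pep (WARD ∩ PWL, CQ). -/

import Mathlib

/-! ### Core: terms, atoms, TGDs, CQs, certain answers -/

/-- Terms: constants ⊕ nulls ⊕ variables (each indexed by a natural number). -/
abbrev Term' : Type := ℕ ⊕ ℕ ⊕ ℕ

/-- The constant `n`. -/
def Term'.cst (n : ℕ) : Term' := Sum.inl n
/-- The labeled null `n`. -/
def Term'.nul (n : ℕ) : Term' := Sum.inr (Sum.inl n)
/-- The variable `n`. -/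
def Term'.var (n : ℕ) : Term' := Sum.inr (Sum.inr n)

def Term'.isVarB : Term' → Bool
  | Sum.inr (Sum.inr _) => true
  | _ => false

def Term'.isConstB : Term' → Bool
  | Sum.inl _ => true
  | _ => false

def Term'.isNullB : Term' → Bool
  | Sum.inr (Sum.inl _) => true
  | _ => false

/-- A (relational) atom: a predicate symbol together with a list of argument terms. -/
abbrev Atom : Type := ℕ × List Term'

/-- Apply a substitution to an atom. -/
def mapAtom (h : Term' → Term') (a : Atom) : Atom := (a.1, a.2.map h)

/-- A substitution is the identity on constants. -/
def constPres (h : Term' → Term') : Prop := ∀ n, h (Term'.cst n) = Term'.cst n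

/-- The variable `v` occurs in the set of atoms `A`. -/
def occursIn (A : Finset Atom) (v : ℕ) : Prop := ∃ a ∈ A, Term'.var v ∈ a.2

/-- A fact is an atom that contains only constants. -/
def isFact (a : Atom) : Prop := ∀ t ∈ a.2, Term'.isConstB t = true

/-- A tuple-generating dependency (TGD) `body → ∃ z̄ head`; the existentially
quantified variables are exactly the head variables not occurring in the body. -/
structure TGD where
  body : Finset Atom
  head : Finset Atom
deriving DecidableEq

/-- A TGD is well-formed if its body and head contain only variables
(no constants and no nulls). -/
def TGD.wf (σ : TGD) : Prop := ∀ a ∈ σ.body ∪ σ.head, ∀ t ∈ a.2, Term'.isVarB t = true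

/-- `v` is an existentially quantified variable of `σ`. -/
def isExistVar (σ : TGD) (v : ℕ) : Prop := occursIn σ.head v ∧ ¬ occursIn σ.body v

/-- An instance `I` (a set of atoms) satisfies a TGD: every homomorphism of the body
into `I` extends (on the body variables, in particular on the frontier) to a
homomorphism of the head into `I`. -/
def satTGD (I : Set Atom) (σ : TGD) : Prop :=
  ∀ h : Term' → Term', constPres h → (∀ a ∈ σ.body, mapAtom h a ∈ I) →
    ∃ h' : Term' → Term', constPres h' ∧
      (∀ v, occursIn σ.body v → h' (Term'.var v) = h (Term'.var v)) ∧
      (∀ a ∈ σ.head, mapAtom h' a ∈ I)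

/-- A conjunctive query: a tuple of output terms and a finite set of body atoms. -/
structure CQ where
  output : List Term'
  atoms : Finset Atom
deriving DecidableEq

/-- Well-formed CQ: no nulls in the atoms, and the output tuple consists of variables. -/
def CQ.wf (q : CQ) : Prop :=
  (∀ a ∈ q.atoms, ∀ t ∈ a.2, Term'.isNullB t = false) ∧
  (∀ t ∈ q.output, Term'.isVarB t = true)

/-- The evaluation `q(I)` of a CQ over an instance: all tuples of constants obtained as
homomorphic images of the output tuple. -/
def CQ.eval (q : CQ) (I : Set Atom) : Set (List ℕ) :=
  { c | ∃ h : Term' → Term', constPres h ∧ (∀ a ∈ q.atoms, mapAtom h a ∈ I) ∧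
        q.output.map h = c.map Term'.cst }

/-- The certain answers to `q` w.r.t. the database `D` and the set `S` of TGDs. -/
def cert (q : CQ) (D : Finset Atom) (S : Finset TGD) : Set (List ℕ) :=
  { c | ∀ I : Set Atom, ↑D ⊆ I → (∀ σ ∈ S, satTGD I σ) → c ∈ q.eval I }

/-- The active domain of a database: all constants occurring in it. -/
def adom (D : Finset Atom) : Set ℕ := { n | ∃ a ∈ D, Term'.cst n ∈ a.2 }

/-! ### Wardedness, piece-wise linearity, predicate levels -/

/-- The predicate `p` occurs in the set of atoms `A`. -/
def occursPredIn (A : Finset Atom) (p : ℕ) : Prop := ∃ a ∈ A, a.1 = p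

/-- The affected positions of (the schema of) `S`: `Affected S p i` says that the
`i`-th position of predicate `p` is affected. -/
inductive Affected (S : Finset TGD) : ℕ → ℕ → Prop
  | base (σ : TGD) (hσ : σ ∈ S) (v : ℕ) (hv : isExistVar σ v)
      (a : Atom) (ha : a ∈ σ.head) (i : ℕ) (hi : a.2[i]? = some (Term'.var v)) :
      Affected S a.1 i
  | step (σ : TGD) (hσ : σ ∈ S) (v : ℕ)
      (hb : occursIn σ.body v) (hh : occursIn σ.head v)
      (hall : ∀ b ∈ σ.body, ∀ j : ℕ, b.2[j]? = some (Term'.var v) → Affected S b.1 j)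
      (a : Atom) (ha : a ∈ σ.head) (i : ℕ) (hi : a.2[i]? = some (Term'.var v)) :
      Affected S a.1 i

/-- A body variable of `σ` is harmless if at least one of its occurrences in the body
is at a non-affected position. -/
def harmless (S : Finset TGD) (σ : TGD) (v : ℕ) : Prop :=
  ∃ b ∈ σ.body, ∃ i : ℕ, b.2[i]? = some (Term'.var v) ∧ ¬ Affected S b.1 i

/-- A body variable is dangerous if it is harmful (not harmless) and is a frontier
variable (it occurs in the head). -/
def dangerous (S : Finset TGD) (σ : TGD) (v : ℕ) : Prop :=
  occursIn σ.body v ∧ occursIn σ.head v ∧ ¬ harmless S σ v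

/-- `S` is warded: each TGD either has no dangerous body variables, or has a body atom
(a ward) containing all dangerous variables and sharing only harmless variables with
the rest of the body. -/
def Warded (S : Finset TGD) : Prop :=
  ∀ σ ∈ S, (∀ v, ¬ dangerous S σ v) ∨
    ∃ α ∈ σ.body, (∀ v, dangerous S σ v → Term'.var v ∈ α.2) ∧
      (∀ v, Term'.var v ∈ α.2 → occursIn (σ.body.erase α) v → harmless S σ v)

/-- Edge of the predicate graph of `S`. -/
def pgEdge (S : Finset TGD) (p r : ℕ) : Prop :=
  ∃ σ ∈ S, occursPredIn σ.body p ∧ occursPredIn σ.head r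

/-- Two predicates are mutually recursive if they lie on a common cycle of the
predicate graph. -/
def mutRec (S : Finset TGD) (p r : ℕ) : Prop :=
  Relation.TransGen (pgEdge S) p r ∧ Relation.TransGen (pgEdge S) r p

/-- `S` is piece-wise linear: each TGD has at most one body atom whose predicate is
mutually recursive with a predicate of its head. -/
def PWL (S : Finset TGD) : Prop :=
  ∀ σ ∈ S, ∀ α ∈ σ.body, ∀ β ∈ σ.body,
    (∃ γ ∈ σ.head, mutRec S α.1 γ.1) → (∃ γ ∈ σ.head, mutRec S β.1 γ.1) → α = β

/-- Every TGD of `S` has exactly one head atom. -/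
def singleHead (S : Finset TGD) : Prop := ∀ σ ∈ S, σ.head.card = 1

/-- The predicates occurring in `S` (as a set). -/
def schP (S : Finset TGD) : Set ℕ :=
  { p | ∃ σ ∈ S, occursPredIn σ.body p ∨ occursPredIn σ.head p }

/-- The predicates occurring in `S` (as a finite set). -/
def schF (S : Finset TGD) : Finset ℕ :=
  S.sup (fun σ => (σ.body ∪ σ.head).image (fun a => a.1))

/-- `lvl` is the (unique) level function of `S`:
`lvl p = max { lvl r | (r,p) an edge of the predicate graph, r not mutually recursive
with p } + 1` (with `max ∅ = 0`). -/
def IsLevelFn (S : Finset TGD) (lvl : ℕ → ℕ) : Prop :=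
  ∀ p ∈ schP S,
    (∀ r, pgEdge S r p → ¬ mutRec S r p → lvl r < lvl p) ∧
    (lvl p = 1 ∨ ∃ r, pgEdge S r p ∧ ¬ mutRec S r p ∧ lvl p = lvl r + 1)

/-- The maximal body size of a TGD of `S`. -/
def maxBody (S : Finset TGD) : ℕ := S.sup (fun σ => σ.body.card)

/-- `f_{WARD∩PWL}(n, S) = (n+1) · max_{P ∈ sch(S)} level(P) · max_{σ ∈ S} |body(σ)|`,
where `n` is the number of atoms of the CQ (resp. the cardinality of the atom set). -/
def fWardPwl (n : ℕ) (S : Finset TGD) (lvl : ℕ → ℕ) : ℕ :=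
  (n + 1) * (schF S).sup lvl * maxBody S

/-- `f_{WARD}(n, S) = 2 · max (n, max_{σ ∈ S} |body(σ)|)`. -/
def fWard (n : ℕ) (S : Finset TGD) : ℕ := 2 * max n (maxBody S)

/-! ### Query languages and expressive power -/

/-- The extensional (database) schema of `S`: the predicates of `sch(S)` not occurring
in any head of `S`. -/
def edbP (S : Finset TGD) : Set ℕ :=
  { p | p ∈ schP S ∧ ∀ σ ∈ S, ¬ occursPredIn σ.head p }

/-- The database `D` is over the set `E` of predicates (and consists of facts). -/
def DBover (D : Finset Atom) (E : Set ℕ) : Prop :=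
  (∀ a ∈ D, isFact a) ∧ (∀ a ∈ D, a.1 ∈ E)

/-- The CQ `q` is over the set `P` of predicates. -/
def CQover (q : CQ) (P : Set ℕ) : Prop := ∀ a ∈ q.atoms, a.1 ∈ P

/-- A query: a (finite) set of TGDs together with a CQ. -/
abbrev Query : Type := Finset TGD × CQ

/-- A well-formed query: the TGDs contain only variables, the CQ is well-formed and
over the schema of the TGDs. -/
def wfQuery (Q : Query) : Prop :=
  (∀ σ ∈ Q.1, TGD.wf σ) ∧ CQ.wf Q.2 ∧ CQover Q.2 (schP Q.1)

/-- The (combined) expressive power of a query `Q = (Σ, q)`: all pairs `(D, c̄)` with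
`D` a database over `edb(Σ)` and `c̄ ∈ adom(D)^{|x̄|}` a certain answer. -/
def ep (Q : Query) : Set (Finset Atom × List ℕ) :=
  { Dc | DBover Dc.1 (edbP Q.1) ∧ Dc.2.length = Q.2.output.length ∧
         (∀ n ∈ Dc.2, n ∈ adom Dc.1) ∧ Dc.2 ∈ cert Q.2 Dc.1 Q.1 }

/-- The combined expressive power of a query language. -/
def cep (L : Set Query) : Set (Set (Finset Atom × List ℕ)) := ep '' L

/-- `L1 ≤_cep L2`. -/
def cepLE (L1 L2 : Set Query) : Prop := cep L1 ⊆ cep L2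

/-- `Q` and `Q'` are equivalent: they evaluate to the same certain answers on every
database over the common extensional schema. -/
def queryEquivOn (Q Q' : Query) : Prop :=
  ∀ D : Finset Atom, DBover D (edbP Q.1 ∩ edbP Q'.1) → cert Q.2 D Q.1 = cert Q'.2 D Q'.1

/-- `L1 ⪯ L2`: every query of `L1` can be equivalently rewritten as a query of `L2`. -/
def langLE (L1 L2 : Set Query) : Prop := ∀ Q ∈ L1, ∃ Q' ∈ L2, queryEquivOn Q Q'

/-- The class of sets of full single-head TGDs (Datalog programs). -/
def FULL1 : Set (Finset TGD) :=
  { S | (∀ σ ∈ S, TGD.wf σ) ∧ ∀ σ ∈ S, σ.head.card = 1 ∧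
        ∀ v, occursIn σ.head v → occursIn σ.body v }

/-- The class of warded sets of TGDs. -/
def WARDc : Set (Finset TGD) := { S | (∀ σ ∈ S, TGD.wf σ) ∧ Warded S }

/-- The class of piece-wise linear sets of TGDs. -/
def PWLc : Set (Finset TGD) := { S | (∀ σ ∈ S, TGD.wf σ) ∧ PWL S }

/-- The query language `(C, CQ)` based on a class `C` of sets of TGDs. -/
def langOf (C : Set (Finset TGD)) : Set Query :=
  { Q | Q.1 ∈ C ∧ CQ.wf Q.2 ∧ CQover Q.2 (schP Q.1) }

/-- The (program) expressive power of a set `S` of TGDs: all triples `(D, q, c̄)` with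
`D` a database over `edb(S)`, `q` a CQ over `sch(S)`, and `c̄ ∈ adom(D)^{|x̄|}` a
certain answer. -/
def epP (S : Finset TGD) : Set (Finset Atom × CQ × List ℕ) :=
  { x | DBover x.1 (edbP S) ∧ CQ.wf x.2.1 ∧ CQover x.2.1 (schP S) ∧
        x.2.2.length = x.2.1.output.length ∧ (∀ n ∈ x.2.2, n ∈ adom x.1) ∧
        x.2.2 ∈ cert x.2.1 x.1 S }

/-- The program expressive power of the query language `(C, CQ)`. -/
def pep (C : Set (Finset TGD)) : Set (Set (Finset Atom × CQ × List ℕ)) := epP '' C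

/-- `(C1, CQ) ≤_pep (C2, CQ)`. -/
def pepLE (C1 C2 : Set (Finset TGD)) : Prop := pep C1 ⊆ pep C2

/-- `C1 ⪯ C2` for classes of TGDs: every `Σ ∈ C1` can be rewritten into some
`Σ' ∈ C2` giving the same certain answers for all databases over the common
extensional schema and all CQs over the common schema. -/
def classLE (C1 C2 : Set (Finset TGD)) : Prop :=
  ∀ S ∈ C1, ∃ S' ∈ C2, ∀ (D : Finset Atom) (q : CQ),
    DBover D (edbP S ∩ edbP S') → CQ.wf q → CQover q (schP S ∩ schP S') →
    cert q D S = cert q D S'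

/-!
A Datalog program has no existential variables, hence no affected positions and no dangerous
variables, so it is warded; the inclusion `≤_pep` is witnessed by the program itself.

For strictness take `Σ = {P(x) → ∃y R(x,y)}` and `D = {P(0)}`. The CQ `∃y R(x,y)` has the certain
answer `0`, but `R(x,y)` does not have the certain answer `(0,0)`: the model `{P(0), R(0,⊥)}`
refutes it. A Datalog program with the same expressive power would answer `0` to `∃y R(x,y)` in
its least model, whose atoms only mention constants of `D`; that least model therefore contains
`R(0,0)`, so the program would also answer `(0,0)` to `R(x,y)`.
-/

lemma Term'.eq_var_of_isVarB {t : Term'} (h : t.isVarB = true) : ∃ v, t = Term'.var v := by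
  rcases t with n | n | n <;> first | exact ⟨n, rfl⟩ | simp [Term'.isVarB] at h

lemma TGD.wf.eq_var_of_mem_head {σ : TGD} (hσ : σ.wf) {a : Atom} (ha : a ∈ σ.head)
    {t : Term'} (ht : t ∈ a.2) : ∃ v, t = Term'.var v :=
  Term'.eq_var_of_isVarB (hσ a (Finset.mem_union_right _ ha) t ht)

lemma CQ.eval_mono (q : CQ) {I J : Set Atom} (hIJ : I ⊆ J) : q.eval I ⊆ q.eval J :=
  fun _ ⟨h, hc, hat, hout⟩ => ⟨h, hc, fun a ha => hIJ (hat a ha), hout⟩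

lemma pepLE_of_subset {C1 C2 : Set (Finset TGD)} (h : C1 ⊆ C2) : pepLE C1 C2 :=
  Set.image_mono h

def IsFull (S : Finset TGD) : Prop := ∀ σ ∈ S, ∀ v, occursIn σ.head v → occursIn σ.body v

lemma isFull_of_mem_FULL1 {S : Finset TGD} (hS : S ∈ FULL1) : IsFull S :=
  fun σ hσ => (hS.2 σ hσ).2

section Full

variable {S : Finset TGD}

lemma not_affected_of_isFull (hS : IsFull S) {p i : ℕ} : ¬ Affected S p i := by
  intro h
  induction h with
  | base σ hσ v hv => exact hv.2 (hS σ hσ v hv.1)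
  | step σ hσ v hb _ _ _ _ _ _ ih =>
    obtain ⟨b, hbB, hvb⟩ := hb
    obtain ⟨j, hj⟩ := List.mem_iff_getElem?.mp hvb
    exact ih b hbB j hj

lemma warded_of_isFull (hS : IsFull S) : Warded S := by
  refine fun σ _ => Or.inl ?_
  rintro v ⟨⟨b, hbB, hvb⟩, -, hharmful⟩
  obtain ⟨j, hj⟩ := List.mem_iff_getElem?.mp hvb
  exact hharmful ⟨b, hbB, j, hj, not_affected_of_isFull hS⟩

end Full

lemma full1_inter_pwl_subset : FULL1 ∩ PWLc ⊆ WARDc ∩ PWLc :=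
  fun _ ⟨hF, hP⟩ => ⟨⟨hF.1, warded_of_isFull (isFull_of_mem_FULL1 hF)⟩, hP⟩

section LeastModel

/-- The atoms obtained from `D` by firing the TGDs of `S` without inventing nulls; for a
Datalog program this is the least model. -/
inductive Derivable (S : Finset TGD) (D : Finset Atom) : Atom → Prop
  | base {a : Atom} : a ∈ D → Derivable S D a
  | step (σ : TGD) (hσ : σ ∈ S) (h : Term' → Term') (hc : constPres h)
      (hb : ∀ a ∈ σ.body, Derivable S D (mapAtom h a)) (a : Atom) (ha : a ∈ σ.head) :
      Derivable S D (mapAtom h a)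

variable {S : Finset TGD} {D : Finset Atom}

lemma satTGD_derivable : ∀ σ ∈ S, satTGD {a | Derivable S D a} σ :=
  fun σ hσ h hc hb => ⟨h, hc, fun _ _ => rfl, fun a ha => Derivable.step σ hσ h hc hb a ha⟩

lemma mapAtom_congr_of_isFull (hwf : ∀ σ ∈ S, σ.wf) (hS : IsFull S) {σ : TGD} (hσ : σ ∈ S)
    {h h' : Term' → Term'} (hagree : ∀ v, occursIn σ.body v → h' (Term'.var v) = h (Term'.var v))
    {a : Atom} (ha : a ∈ σ.head) : mapAtom h' a = mapAtom h a := by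
  refine congrArg _ (List.map_congr_left fun t ht => ?_)
  obtain ⟨v, rfl⟩ := (hwf σ hσ).eq_var_of_mem_head ha ht
  exact hagree v (hS σ hσ v ⟨a, ha, ht⟩)

lemma Derivable.mem_of_model (hwf : ∀ σ ∈ S, σ.wf) (hS : IsFull S) {I : Set Atom}
    (hD : ↑D ⊆ I) (hsat : ∀ σ ∈ S, satTGD I σ) {a : Atom} (ha : Derivable S D a) : a ∈ I := by
  induction ha with
  | base h => exact hD h
  | step σ hσ h hc _ a ha ih =>
    obtain ⟨h', -, hagree, hhead⟩ := hsat σ hσ h hc ih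
    rw [← mapAtom_congr_of_isFull hwf hS hσ hagree ha]
    exact hhead a ha

lemma mem_cert_iff_of_isFull (hwf : ∀ σ ∈ S, σ.wf) (hS : IsFull S) {q : CQ} {c : List ℕ} :
    c ∈ cert q D S ↔ c ∈ q.eval {a | Derivable S D a} :=
  ⟨fun hc => hc _ (fun _ => Derivable.base) satTGD_derivable,
    fun hc _ hD hsat => q.eval_mono (fun _ => Derivable.mem_of_model hwf hS hD hsat) hc⟩

lemma Derivable.exists_mem_db_of_mem (hwf : ∀ σ ∈ S, σ.wf) (hS : IsFull S) {a : Atom}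
    (ha : Derivable S D a) {t : Term'} (ht : t ∈ a.2) : ∃ b ∈ D, t ∈ b.2 := by
  induction ha generalizing t with
  | base hD => exact ⟨_, hD, ht⟩
  | step σ hσ h _ _ a ha ih =>
    obtain ⟨u, hu, rfl⟩ := List.mem_map.mp ht
    obtain ⟨v, rfl⟩ := (hwf σ hσ).eq_var_of_mem_head ha hu
    obtain ⟨b, hbB, hvb⟩ := hS σ hσ v ⟨a, ha, hu⟩
    exact ih b hbB (List.mem_map_of_mem hvb)

end LeastModel

/-! The separating example; the predicates `P` and `R` are encoded as `1` and `2`. -/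

/-- `P(x) → ∃y R(x,y)`. -/
def tgdPR : TGD := ⟨{(1, [Term'.var 0])}, {(2, [Term'.var 0, Term'.var 1])}⟩

def progPR : Finset TGD := {tgdPR}

def dbP0 : Finset Atom := {(1, [Term'.cst 0])}

/-- `q(x) ← R(x,y)`. -/
def cqProjR : CQ := ⟨[Term'.var 0], {(2, [Term'.var 0, Term'.var 1])}⟩

/-- `q(x,y) ← R(x,y)`. -/
def cqR : CQ := ⟨[Term'.var 0, Term'.var 1], {(2, [Term'.var 0, Term'.var 1])}⟩

/-- `{P(0), R(0,⊥)}`. -/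
def modelPR : Set Atom := {(1, [Term'.cst 0]), (2, [Term'.cst 0, Term'.nul 0])}

lemma progPR_wf : ∀ σ ∈ progPR, σ.wf := by
  simp only [progPR, Finset.mem_singleton, forall_eq]
  unfold TGD.wf
  decide

lemma cqProjR_wf : cqProjR.wf := by
  simp [CQ.wf, cqProjR, Term'.var, Term'.isVarB, Term'.isNullB]

lemma cqR_wf : cqR.wf := by
  simp [CQ.wf, cqR, Term'.var, Term'.isVarB, Term'.isNullB]

lemma eq_two_of_affected_progPR {p i : ℕ} (h : Affected progPR p i) : p = 2 := by
  cases h with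
  | base σ hσ _ _ a ha => simp_all [progPR, tgdPR]
  | step σ hσ _ _ _ _ a ha => simp_all [progPR, tgdPR]

lemma progPR_warded : Warded progPR := by
  intro σ hσ
  obtain rfl : σ = tgdPR := Finset.mem_singleton.mp hσ
  refine Or.inl ?_
  rintro v ⟨⟨b, hbB, hvb⟩, -, hharmful⟩
  obtain rfl : b = (1, [Term'.var 0]) := Finset.mem_singleton.mp hbB
  obtain ⟨j, hj⟩ := List.mem_iff_getElem?.mp hvb
  exact hharmful ⟨_, hbB, j, hj, fun h => by simpa using eq_two_of_affected_progPR h⟩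

lemma progPR_pwl : PWL progPR := by
  simp [PWL, progPR, tgdPR]

lemma progPR_mem_ward_inter_pwl : progPR ∈ WARDc ∩ PWLc :=
  ⟨⟨progPR_wf, progPR_warded⟩, progPR_wf, progPR_pwl⟩

lemma dbP0_over_edbP : DBover dbP0 (edbP progPR) := by
  refine ⟨by simp [dbP0, isFact, Term'.cst, Term'.isConstB], ?_⟩
  simp only [dbP0, Finset.mem_singleton, forall_eq]
  refine ⟨⟨tgdPR, by simp [progPR], Or.inl ⟨_, Finset.mem_singleton_self _, rfl⟩⟩, ?_⟩
  simp [progPR, tgdPR, occursPredIn]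

lemma zero_mem_cert_cqProjR : [0] ∈ cert cqProjR dbP0 progPR := by
  intro I hD hsat
  let toZero : Term' → Term' := Sum.elim Term'.cst fun _ => Term'.cst 0
  have hbody : ∀ a ∈ tgdPR.body, mapAtom toZero a ∈ I := by
    simp only [tgdPR, Finset.mem_singleton, forall_eq]
    exact hD (Finset.mem_singleton_self _)
  obtain ⟨h, hc, hagree, hhead⟩ :=
    hsat tgdPR (Finset.mem_singleton_self _) toZero (fun _ => rfl) hbody
  have hx : h (Term'.var 0) = Term'.cst 0 := hagree 0 ⟨_, Finset.mem_singleton_self _, by simp⟩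
  exact ⟨h, hc, by simpa [cqProjR, tgdPR] using hhead, by simp [cqProjR, hx]⟩

lemma mem_epP_progPR : (dbP0, cqProjR, [0]) ∈ epP progPR := by
  refine ⟨dbP0_over_edbP, cqProjR_wf, ?_, rfl, ?_, zero_mem_cert_cqProjR⟩
  · simp only [CQover, cqProjR, Finset.mem_singleton, forall_eq]
    exact ⟨tgdPR, Finset.mem_singleton_self _, Or.inr ⟨_, Finset.mem_singleton_self _, rfl⟩⟩
  · simp [adom, dbP0]

lemma satTGD_modelPR : ∀ σ ∈ progPR, satTGD modelPR σ := by
  intro σ hσ h hc hbody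
  obtain rfl : σ = tgdPR := Finset.mem_singleton.mp hσ
  have hx : h (Term'.var 0) = Term'.cst 0 := by
    simpa [modelPR, mapAtom] using hbody _ (Finset.mem_singleton_self _)
  have h01 : Term'.var 0 ≠ Term'.var 1 := by decide
  refine ⟨Function.update h (Term'.var 1) (Term'.nul 0), fun n => ?_, fun v hv => ?_, ?_⟩
  · exact (Function.update_of_ne Sum.inl_ne_inr _ _).trans (hc n)
  · obtain ⟨b, hbB, hvb⟩ := hv
    obtain rfl : b = (1, [Term'.var 0]) := Finset.mem_singleton.mp hbB
    obtain rfl : v = 0 := by simpa [Term'.var] using hvb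
    simp [Function.update, Term'.var]
  · simp [tgdPR, modelPR, mapAtom, Function.update_of_ne h01, hx]

lemma zero_zero_not_mem_cert_cqR : [0, 0] ∉ cert cqR dbP0 progPR := by
  intro hc
  obtain ⟨h, -, hat, hout⟩ := hc modelPR (by simp [dbP0, modelPR]) satTGD_modelPR
  simp only [cqR, List.map_cons, List.map_nil, List.cons.injEq, and_true] at hout
  have hmem := hat _ (Finset.mem_singleton_self _)
  simp [modelPR, mapAtom, hout, Term'.cst, Term'.nul] at hmem

lemma zero_zero_mem_cert_cqR_of_isFull {S : Finset TGD} (hwf : ∀ σ ∈ S, σ.wf) (hS : IsFull S)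
    (h0 : [0] ∈ cert cqProjR dbP0 S) : [0, 0] ∈ cert cqR dbP0 S := by
  rw [mem_cert_iff_of_isFull hwf hS] at h0 ⊢
  obtain ⟨h, hc, hat, hout⟩ := h0
  have hR := hat _ (Finset.mem_singleton_self _)
  -- every term of a derivable atom is the constant `0`, the only term of `dbP0`
  have hzero : ∀ t ∈ (mapAtom h (2, [Term'.var 0, Term'.var 1])).2, t = Term'.cst 0 := by
    intro t ht
    simpa [dbP0] using hR.exists_mem_db_of_mem hwf hS ht
  refine ⟨h, hc, fun a ha => ?_, ?_⟩
  · obtain rfl := Finset.mem_singleton.mp ha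
    exact hR
  · simp_all [cqR, mapAtom]

lemma epP_ne_progPR_of_isFull {S : Finset TGD} (hwf : ∀ σ ∈ S, σ.wf) (hS : IsFull S) :
    epP S ≠ epP progPR := by
  intro hEq
  obtain ⟨hDB, -, hover, -, -, hcert⟩ : (dbP0, cqProjR, [0]) ∈ epP S :=
    hEq ▸ mem_epP_progPR
  have hpair : (dbP0, cqR, [0, 0]) ∈ epP S :=
    ⟨hDB, cqR_wf, hover, rfl, by simp [adom, dbP0],
      zero_zero_mem_cert_cqR_of_isFull hwf hS hcert⟩
  exact zero_zero_not_mem_cert_cqR (hEq ▸ hpair).2.2.2.2.2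

/-- `PWL-DATALOG <_pep (WARD ∩ PWL, CQ)`. -/
theorem pwl_datalog_lt_pep_warded_pwl :
    pepLE (FULL1 ∩ PWLc) (WARDc ∩ PWLc) ∧ ¬ pepLE (WARDc ∩ PWLc) (FULL1 ∩ PWLc) := by
  refine ⟨pepLE_of_subset full1_inter_pwl_subset, fun hle => ?_⟩
  obtain ⟨S, ⟨hS, -⟩, hEq⟩ := hle ⟨progPR, progPR_mem_ward_inter_pwl, rfl⟩
  exact epP_ne_progPR_of_isFull hS.1 (isFull_of_mem_FULL1 hS) hEq
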